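/- arXiv:2402.15776 — 2 statements merged into one kernel-verified Lean document; each statement's English description precedes it below -/
import Mathlib

section
/- Strong duality for finite-horizon constrained MDPs: under Slater's condition, max over policies π of (inf over λ ∈ ℝ^I_{≥0} of L(π,λ)) equals min over λ ∈ ℝ^I_{≥0} of (max over policies π of L(π,λ)), and both the primal optimum (over π) and the dual optimum (over λ) are attained. -/
/-!
Occupancy measures turn every policy value into a linear functional of the state–action
occupancy `ν_h(s, a)`, and the occupancies of two policies can be mixed by a third policy.
Hence the set of value vectors `(V^π_r, V^π_{u_i} - c_i)_i` is convex, and a separating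
hyperplane between it and the open orthant above `(V^{π*}_r, 0)`, where `π*` is an optimal
feasible policy (which exists by compactness), gives multipliers `(μ₀, μ)`. Slater's condition
forces `μ₀ > 0`, so `λ* = μ / μ₀` makes `(π*, λ*)` a saddle point of the Lagrangian.
-/

open Finset

noncomputable section

/-- A (nonstationary) policy: at each step and state, a probability distribution over actions. -/
def IsPolicy {S A : Type*} [Fintype A] (π : ℕ → S → A → ℝ) : Prop :=
  ∀ h s, (∀ a, 0 ≤ π h s a) ∧ ∑ a, π h s a = 1

/-- A (nonstationary) transition kernel. -/
def IsKernel {S A : Type*} [Fintype S] (p : ℕ → S → A → S → ℝ) : Prop :=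
  ∀ h s a, (∀ s', 0 ≤ p h s a s') ∧ ∑ s', p h s a s' = 1

/-- State-action value with `n` steps remaining (including the current step `h`). -/
def Qaux {S A : Type*} [Fintype S] [Fintype A] (p : ℕ → S → A → S → ℝ)
    (r' : ℕ → S → A → ℝ) (π : ℕ → S → A → ℝ) : ℕ → ℕ → S → A → ℝ
  | 0, _, _, _ => 0
  | n + 1, h, s, a =>
      r' h s a + ∑ s', p h s a s' * ∑ a', π (h + 1) s' a' * Qaux p r' π n (h + 1) s' a'

/-- `Q^π_{r',h}(s,a)` in the horizon-`H` MDP with transitions `p`. -/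
def Qval {S A : Type*} [Fintype S] [Fintype A] (H : ℕ) (p : ℕ → S → A → S → ℝ)
    (r' : ℕ → S → A → ℝ) (π : ℕ → S → A → ℝ) (h : ℕ) (s : S) (a : A) : ℝ :=
  Qaux p r' π (H - h) h s a

/-- Value `V^π_{r'}` from the initial state `s₁`. -/
def Vval {S A : Type*} [Fintype S] [Fintype A] (H : ℕ) (p : ℕ → S → A → S → ℝ)
    (s₁ : S) (r' : ℕ → S → A → ℝ) (π : ℕ → S → A → ℝ) : ℝ :=
  ∑ a, π 0 s₁ a * Qval H p r' π 0 s₁ a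

/-- The Lagrangian `L(π,λ) = V^π_r + ∑ i, λ_i (V^π_{u_i} - c_i)`. -/
def Lag {S A : Type*} [Fintype S] [Fintype A] {I : ℕ} (H : ℕ) (p : ℕ → S → A → S → ℝ)
    (s₁ : S) (r : ℕ → S → A → ℝ) (u : Fin I → ℕ → S → A → ℝ) (c : Fin I → ℝ)
    (π : ℕ → S → A → ℝ) (lam : Fin I → ℝ) : ℝ :=
  Vval H p s₁ r π + ∑ i, lam i * (Vval H p s₁ (u i) π - c i)

open Set

theorem nonpos_of_forall_pos_mul_le {a w : ℝ} (h : ∀ t : ℝ, 0 < t → t * a ≤ w) : a ≤ 0 := by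
  by_contra! ha
  have := h ((|w| + 1) / a) (by positivity)
  rw [div_mul_cancel₀ _ ha.ne'] at this
  linarith [le_abs_self w]

/-- Gordan's alternative, for a convex set in place of a cone. -/
theorem exists_nonneg_ne_zero_sum_mul_nonpos_of_convex {κ : Type*} [Fintype κ]
    {T : Set (κ → ℝ)} (hT : Convex ℝ T) (hne : T.Nonempty) (hdisj : ∀ v ∈ T, ∃ j, v j ≤ 0) :
    ∃ μ : κ → ℝ, μ ≠ 0 ∧ (∀ j, 0 ≤ μ j) ∧ ∀ v ∈ T, ∑ j, μ j * v j ≤ 0 := by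
  classical
  let U : Set (κ → ℝ) := univ.pi fun _ => Ioi 0
  have hdisjU : Disjoint U T := Set.disjoint_left.2 fun v hvU hvT => by
    obtain ⟨j, hj⟩ := hdisj v hvT
    exact (hvU j (mem_univ j)).not_ge hj
  obtain ⟨φ, w, hφU, hφT⟩ := geometric_hahn_banach_open (convex_pi fun _ _ => convex_Ioi 0)
    (isOpen_set_pi finite_univ fun _ _ => isOpen_Ioi) hT hdisjU
  have hφ_le : ∀ v : κ → ℝ, 0 ≤ v → φ v ≤ w := by
    intro v hv
    have hvU : v ∈ closure U := by
      rw [closure_pi_set]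
      exact fun j _ => by rw [closure_Ioi]; exact hv j
    exact closure_minimal (fun x hx => (hφU x hx).le)
      (isClosed_le φ.continuous continuous_const) hvU
  have hφ_single : ∀ j, φ (Pi.single j 1) ≤ 0 := fun j =>
    nonpos_of_forall_pos_mul_le fun t ht => by
      simpa using hφ_le (t • Pi.single j 1) (smul_nonneg ht.le (Pi.single_nonneg.2 zero_le_one))
  have hφ_sum : ∀ v, φ v = ∑ j, v j * φ (Pi.single j 1) := fun v => by
    conv_lhs => rw [← Finset.univ_sum_single v]
    simp_rw [map_sum, ← smul_eq_mul, ← map_smul, ← Pi.single_smul', smul_eq_mul, mul_one]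
  refine ⟨fun j => -φ (Pi.single j 1), fun hμ => ?_, fun j => neg_nonneg.2 (hφ_single j),
    fun v hv => ?_⟩
  · have hφ0 : ∀ v, φ v = 0 := fun v => by
      simp [hφ_sum v, fun j => neg_eq_zero.1 (congrFun hμ j)]
    obtain ⟨v, hv⟩ := hne
    linarith [hφT v hv, hφ0 1, hφ0 v, hφU 1 fun j _ => show (0 : ℝ) < 1 from one_pos]
  · have hw : 0 ≤ w := by simpa using hφ_le 0 le_rfl
    simp only [neg_mul, Finset.sum_neg_distrib, neg_nonpos, mul_comm (φ _)]
    linarith [hφT v hv, hφ_sum v]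

/-- Fritz John multipliers for maximizing `f` subject to `g i ≥ 0`. The hypothesis `hmix` says
that the image of `x ↦ (f x, g · x)` is convex; no structure on `α` is needed. -/
theorem exists_fritzJohn_multipliers {α ι : Type*} [Fintype ι] (f : α → ℝ) (g : ι → α → ℝ)
    (hmix : ∀ x y : α, ∀ t ∈ Icc (0 : ℝ) 1, ∃ z,
      f z = t * f x + (1 - t) * f y ∧ ∀ i, g i z = t * g i x + (1 - t) * g i y)
    {x₀ : α} (hmax : ∀ x, (∀ i, 0 ≤ g i x) → f x ≤ f x₀) :
    ∃ μ₀ : ℝ, ∃ μ : ι → ℝ, 0 ≤ μ₀ ∧ (∀ i, 0 ≤ μ i) ∧ (μ₀ = 0 → μ ≠ 0) ∧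
      ∀ x, μ₀ * (f x - f x₀) + ∑ i, μ i * g i x ≤ 0 := by
  let F : α → Option ι → ℝ := fun x j => j.elim (f x - f x₀) fun i => g i x
  have hconv : Convex ℝ (range F) := by
    rintro _ ⟨x, rfl⟩ _ ⟨y, rfl⟩ a b ha hb hab
    obtain ⟨z, hfz, hgz⟩ := hmix x y a ⟨ha, by linarith⟩
    refine ⟨z, funext fun j => ?_⟩
    cases j with
    | none =>
      simp only [F, Option.elim, Pi.add_apply, Pi.smul_apply, smul_eq_mul, hfz]
      linear_combination (f x₀ - f y) * hab
    | some i =>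
      simp only [F, Option.elim, Pi.add_apply, Pi.smul_apply, smul_eq_mul, hgz]
      linear_combination (-g i y) * hab
  have hdisj : ∀ v ∈ range F, ∃ j, v j ≤ 0 := by
    rintro _ ⟨x, rfl⟩
    by_cases hx : ∀ i, 0 < g i x
    · exact ⟨none, sub_nonpos.2 (hmax x fun i => (hx i).le)⟩
    · push Not at hx
      obtain ⟨i, hi⟩ := hx
      exact ⟨some i, hi⟩
  obtain ⟨μ, hμ0, hμ, hμF⟩ :=
    exists_nonneg_ne_zero_sum_mul_nonpos_of_convex hconv ⟨F x₀, mem_range_self x₀⟩ hdisj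
  refine ⟨μ none, fun i => μ (some i), hμ none, fun i => hμ (some i),
    fun h0 hμs => hμ0 (funext (Option.rec h0 (congrFun hμs))), fun x => ?_⟩
  simpa [Fintype.sum_option, F] using hμF (F x) (mem_range_self x)

theorem exists_lagrange_multiplier_of_slater {α ι : Type*} [Fintype ι] (f : α → ℝ)
    (g : ι → α → ℝ)
    (hmix : ∀ x y : α, ∀ t ∈ Icc (0 : ℝ) 1, ∃ z,
      f z = t * f x + (1 - t) * f y ∧ ∀ i, g i z = t * g i x + (1 - t) * g i y)
    (hslater : ∃ x, ∀ i, 0 < g i x) {x₀ : α} (hmax : ∀ x, (∀ i, 0 ≤ g i x) → f x ≤ f x₀) :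
    ∃ lam : ι → ℝ, (∀ i, 0 ≤ lam i) ∧ ∀ x, f x + ∑ i, lam i * g i x ≤ f x₀ := by
  obtain ⟨μ₀, μ, hμ₀, hμ, hμ_ne, hμF⟩ := exists_fritzJohn_multipliers f g hmix hmax
  obtain ⟨xbar, hxbar⟩ := hslater
  have hμ₀_pos : 0 < μ₀ := by
    refine hμ₀.lt_of_ne' fun h0 => hμ_ne h0 (funext fun i => ?_)
    have hsum : ∑ i, μ i * g i xbar = 0 :=
      le_antisymm (by simpa [h0] using hμF xbar)
        (Finset.sum_nonneg fun i _ => mul_nonneg (hμ i) (hxbar i).le)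
    have hi := (Finset.sum_eq_zero_iff_of_nonneg fun i _ => mul_nonneg (hμ i) (hxbar i).le).1
      hsum i (mem_univ i)
    exact (mul_eq_zero.1 hi).resolve_right (hxbar i).ne'
  refine ⟨fun i => μ i / μ₀, fun i => div_nonneg (hμ i) hμ₀, fun x => ?_⟩
  have hscaled : μ₀ * (f x + ∑ i, μ i / μ₀ * g i x - f x₀)
      = μ₀ * (f x - f x₀) + ∑ i, μ i * g i x := by
    rw [mul_sub, mul_add, Finset.mul_sum]
    simp_rw [← mul_assoc, mul_div_cancel₀ _ hμ₀_pos.ne']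
    ring
  exact sub_nonpos.1 (nonpos_of_mul_nonpos_right (hscaled ▸ hμF x) hμ₀_pos)

theorem IsSaddlePointOn.iSup_iInf_subtype_eq_iInf_iSup {E F β : Type*} [CompleteLinearOrder β]
    {X : Set E} {Y : Set F} {f : E → F → β} {a : E} {b : F} (h : IsSaddlePointOn X Y f a b)
    (ha : a ∈ X) (hb : b ∈ Y) :
    (⨅ x : X, f x b) = (⨆ y : Y, ⨅ x : X, f x y) ∧
      (⨆ y : Y, f a y) = (⨅ x : X, ⨆ y : Y, f x y) ∧
      (⨆ y : Y, ⨅ x : X, f x y) = (⨅ x : X, ⨆ y : Y, f x y) := by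
  obtain ⟨hY, hX⟩ := (isSaddlePointOn_iff ha hb).1 h
  obtain ⟨hXY, hYX⟩ := isSaddlePointOn_value ha hb h
  simp only [← iSup_subtype'', ← iInf_subtype''] at hX hY hXY hYX
  rw [hX, hY, hXY, hYX]
  exact ⟨rfl, rfl, rfl⟩

namespace CMDP

variable {S A : Type*} [Fintype S] [Fintype A]

omit [Fintype S] in
theorem _root_.IsPolicy.nonneg {π : ℕ → S → A → ℝ} (hπ : IsPolicy π) (h : ℕ) (s : S) (a : A) :
    0 ≤ π h s a :=
  (hπ h s).1 a

open Classical in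
/-- State occupancy `ℙ_π(s_h = s)`; steps are numbered from `0`, so `s₁` is the state at step `0`. -/
def stateOcc (p : ℕ → S → A → S → ℝ) (s₁ : S) (π : ℕ → S → A → ℝ) : ℕ → S → ℝ
  | 0, s => if s = s₁ then 1 else 0
  | h + 1, s' => ∑ s, ∑ a, stateOcc p s₁ π h s * π h s a * p h s a s'

def occupancy (p : ℕ → S → A → S → ℝ) (s₁ : S) (π : ℕ → S → A → ℝ) (h : ℕ) (s : S) (a : A) :
    ℝ :=
  stateOcc p s₁ π h s * π h s a

variable {p : ℕ → S → A → S → ℝ} {s₁ : S}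

section occupancy

variable {π : ℕ → S → A → ℝ}

theorem stateOcc_succ (h : ℕ) (s' : S) :
    stateOcc p s₁ π (h + 1) s' = ∑ s, ∑ a, occupancy p s₁ π h s a * p h s a s' :=
  rfl

theorem stateOcc_nonneg (hp : ∀ h s a s', 0 ≤ p h s a s') (hπ : ∀ h s a, 0 ≤ π h s a) :
    ∀ h s, 0 ≤ stateOcc p s₁ π h s
  | 0, s => by unfold stateOcc; split_ifs <;> norm_num
  | h + 1, s' => Finset.sum_nonneg fun s _ => Finset.sum_nonneg fun a _ =>
      mul_nonneg (mul_nonneg (stateOcc_nonneg hp hπ h s) (hπ h s a)) (hp h s a s')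

theorem occupancy_nonneg (hp : ∀ h s a s', 0 ≤ p h s a s') (hπ : ∀ h s a, 0 ≤ π h s a)
    (h : ℕ) (s : S) (a : A) : 0 ≤ occupancy p s₁ π h s a :=
  mul_nonneg (stateOcc_nonneg hp hπ h s) (hπ h s a)

theorem sum_stateOcc_succ_mul (h : ℕ) (X : S → ℝ) :
    ∑ s', stateOcc p s₁ π (h + 1) s' * X s'
      = ∑ s, ∑ a, occupancy p s₁ π h s a * ∑ s', p h s a s' * X s' := by
  simp only [stateOcc_succ, Finset.sum_mul, Finset.mul_sum]
  rw [Finset.sum_comm]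
  refine Finset.sum_congr rfl fun s _ => ?_
  rw [Finset.sum_comm]
  simp only [mul_assoc]

theorem sum_stateOcc_mul_Qaux (r' : ℕ → S → A → ℝ) :
    ∀ n h, ∑ s, stateOcc p s₁ π h s * ∑ a, π h s a * Qaux p r' π n h s a
      = ∑ k ∈ range n, ∑ s, ∑ a, occupancy p s₁ π (h + k) s a * r' (h + k) s a
  | 0, h => by simp [Qaux]
  | n + 1, h => by
    have ih := sum_stateOcc_mul_Qaux r' n (h + 1)
    simp only [add_assoc, add_comm 1] at ih
    rw [sum_range_succ', ← ih, sum_stateOcc_succ_mul, add_zero]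
    simp only [Qaux, occupancy, mul_add, Finset.mul_sum, Finset.sum_add_distrib, mul_assoc]
    exact add_comm _ _

theorem Vval_eq_sum_occupancy (H : ℕ) (r' : ℕ → S → A → ℝ) :
    Vval H p s₁ r' π = ∑ h ∈ range H, ∑ s, ∑ a, occupancy p s₁ π h s a * r' h s a := by
  have h0 : Vval H p s₁ r' π
      = ∑ s, stateOcc p s₁ π 0 s * ∑ a, π 0 s a * Qaux p r' π H 0 s a := by
    rw [Fintype.sum_eq_single s₁ fun s hs => by simp [stateOcc, hs]]
    simp [stateOcc, Vval, Qval]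
  simpa using h0.trans (sum_stateOcc_mul_Qaux r' H 0)

end occupancy

/-- The policy whose occupancy is the `t`-mixture of those of `π₁` and `π₂`. -/
def mixPolicy (p : ℕ → S → A → S → ℝ) (s₁ : S) (π₁ π₂ : ℕ → S → A → ℝ) (t : ℝ)
    (h : ℕ) (s : S) (a : A) : ℝ :=
  if t * stateOcc p s₁ π₁ h s + (1 - t) * stateOcc p s₁ π₂ h s = 0 then π₁ h s a
  else (t * occupancy p s₁ π₁ h s a + (1 - t) * occupancy p s₁ π₂ h s a) /
    (t * stateOcc p s₁ π₁ h s + (1 - t) * stateOcc p s₁ π₂ h s)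

section mixPolicy

variable {π₁ π₂ : ℕ → S → A → ℝ} {t : ℝ} (hp : ∀ h s a s', 0 ≤ p h s a s')
  (hπ₁ : IsPolicy π₁) (hπ₂ : IsPolicy π₂) (ht : t ∈ Icc (0 : ℝ) 1)
include hp hπ₁ hπ₂ ht

theorem mix_stateOcc_nonneg (h : ℕ) (s : S) :
    0 ≤ t * stateOcc p s₁ π₁ h s ∧ 0 ≤ (1 - t) * stateOcc p s₁ π₂ h s :=
  ⟨mul_nonneg ht.1 (stateOcc_nonneg hp hπ₁.nonneg h s),
    mul_nonneg (sub_nonneg.2 ht.2) (stateOcc_nonneg hp hπ₂.nonneg h s)⟩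

theorem occupancy_mixPolicy_of_stateOcc {h : ℕ} {s : S}
    (hocc : stateOcc p s₁ (mixPolicy p s₁ π₁ π₂ t) h s
      = t * stateOcc p s₁ π₁ h s + (1 - t) * stateOcc p s₁ π₂ h s) (a : A) :
    occupancy p s₁ (mixPolicy p s₁ π₁ π₂ t) h s a
      = t * occupancy p s₁ π₁ h s a + (1 - t) * occupancy p s₁ π₂ h s a := by
  rw [occupancy, hocc, mixPolicy]
  split_ifs with hm
  · obtain ⟨h₁, h₂⟩ := (add_eq_zero_iff_of_nonneg (mix_stateOcc_nonneg hp hπ₁ hπ₂ ht h s).1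
      (mix_stateOcc_nonneg hp hπ₁ hπ₂ ht h s).2).1 hm
    simp only [occupancy, zero_mul, ← mul_assoc, h₁, h₂, add_zero]
  · exact mul_div_cancel₀ _ hm

theorem stateOcc_mixPolicy : ∀ h s, stateOcc p s₁ (mixPolicy p s₁ π₁ π₂ t) h s
      = t * stateOcc p s₁ π₁ h s + (1 - t) * stateOcc p s₁ π₂ h s
  | 0, s => by simp only [stateOcc]; split_ifs <;> ring
  | h + 1, s' => by
    simp only [stateOcc_succ, Finset.mul_sum, ← Finset.sum_add_distrib,
      occupancy_mixPolicy_of_stateOcc hp hπ₁ hπ₂ ht (stateOcc_mixPolicy _ _)]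
    simp only [add_mul, mul_assoc]

theorem occupancy_mixPolicy (h : ℕ) (s : S) (a : A) :
    occupancy p s₁ (mixPolicy p s₁ π₁ π₂ t) h s a
      = t * occupancy p s₁ π₁ h s a + (1 - t) * occupancy p s₁ π₂ h s a :=
  occupancy_mixPolicy_of_stateOcc hp hπ₁ hπ₂ ht (stateOcc_mixPolicy hp hπ₁ hπ₂ ht h s) a

theorem isPolicy_mixPolicy : IsPolicy (mixPolicy p s₁ π₁ π₂ t) := by
  intro h s
  unfold mixPolicy
  split_ifs with hm
  · exact hπ₁ h s
  · have hpos : 0 < t * stateOcc p s₁ π₁ h s + (1 - t) * stateOcc p s₁ π₂ h s :=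
      (add_nonneg (mix_stateOcc_nonneg hp hπ₁ hπ₂ ht h s).1
        (mix_stateOcc_nonneg hp hπ₁ hπ₂ ht h s).2).lt_of_ne' hm
    refine ⟨fun a => div_nonneg (add_nonneg ?_ ?_) hpos.le, ?_⟩
    · exact mul_nonneg ht.1 (occupancy_nonneg hp hπ₁.nonneg h s a)
    · exact mul_nonneg (sub_nonneg.2 ht.2) (occupancy_nonneg hp hπ₂.nonneg h s a)
    · rw [← Finset.sum_div, div_eq_one_iff_eq hm]
      simp only [occupancy, Finset.sum_add_distrib, ← Finset.mul_sum, (hπ₁ h s).2, (hπ₂ h s).2,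
        mul_one]

theorem Vval_mixPolicy (H : ℕ) (r' : ℕ → S → A → ℝ) :
    Vval H p s₁ r' (mixPolicy p s₁ π₁ π₂ t)
      = t * Vval H p s₁ r' π₁ + (1 - t) * Vval H p s₁ r' π₂ := by
  simp only [Vval_eq_sum_occupancy, occupancy_mixPolicy hp hπ₁ hπ₂ ht, Finset.mul_sum, add_mul,
    Finset.sum_add_distrib, mul_assoc]

end mixPolicy

theorem continuous_Qaux (p : ℕ → S → A → S → ℝ) (r' : ℕ → S → A → ℝ) :
    ∀ n h s a, Continuous fun π : ℕ → S → A → ℝ => Qaux p r' π n h s a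
  | 0, _, _, _ => continuous_const
  | n + 1, h, s, a => by
    have ih := continuous_Qaux p r' n (h + 1)
    simp only [Qaux]
    fun_prop

theorem continuous_Vval (H : ℕ) (p : ℕ → S → A → S → ℝ) (s₁ : S) (r' : ℕ → S → A → ℝ) :
    Continuous (Vval H p s₁ r') := by
  have := continuous_Qaux p r' (H - 0) 0 s₁
  unfold Vval Qval
  fun_prop

omit [Fintype S] in
theorem isCompact_setOf_isPolicy : IsCompact {π : ℕ → S → A → ℝ | IsPolicy π} :=
  isCompact_pi_infinite fun _ => isCompact_pi_infinite fun _ => isCompact_stdSimplex ℝ A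

theorem exists_feasible_policy_forall_Vval_le {ι : Type*} (H : ℕ) (p : ℕ → S → A → S → ℝ)
    (s₁ : S) (r : ℕ → S → A → ℝ) (u : ι → ℕ → S → A → ℝ) (c : ι → ℝ)
    (hfeas : ∃ π, IsPolicy π ∧ ∀ i, c i ≤ Vval H p s₁ (u i) π) :
    ∃ πs, IsPolicy πs ∧ (∀ i, c i ≤ Vval H p s₁ (u i) πs) ∧
      ∀ π, IsPolicy π → (∀ i, c i ≤ Vval H p s₁ (u i) π) →
        Vval H p s₁ r π ≤ Vval H p s₁ r πs := by
  have hK : IsCompact {π | IsPolicy π ∧ ∀ i, c i ≤ Vval H p s₁ (u i) π} := by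
    simp only [Set.ofPred_and, Set.ofPred_forall]
    exact isCompact_setOf_isPolicy.inter_right
      (isClosed_iInter fun i => isClosed_le continuous_const (continuous_Vval H p s₁ (u i)))
  obtain ⟨πs, ⟨hπs, hπs_feas⟩, hmax⟩ :=
    hK.exists_isMaxOn hfeas (continuous_Vval H p s₁ r).continuousOn
  exact ⟨πs, hπs, hπs_feas, fun π hπ hπ_feas => hmax ⟨hπ, hπ_feas⟩⟩

theorem Vval_le_Lag {I : ℕ} {H : ℕ} {r : ℕ → S → A → ℝ} {u : Fin I → ℕ → S → A → ℝ}
    {c : Fin I → ℝ} {π : ℕ → S → A → ℝ} {lam : Fin I → ℝ}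
    (hfeas : ∀ i, c i ≤ Vval H p s₁ (u i) π) (hlam : ∀ i, 0 ≤ lam i) :
    Vval H p s₁ r π ≤ Lag H p s₁ r u c π lam :=
  le_add_of_nonneg_right (Finset.sum_nonneg fun i _ => mul_nonneg (hlam i) (sub_nonneg.2 (hfeas i)))

end CMDP

theorem cmdp_strong_duality_general
    {S A : Type*} [Fintype S] [Fintype A]
    {I : ℕ} (H : ℕ) (p : ℕ → S → A → S → ℝ) (hp : IsKernel p) (s₁ : S)
    (r : ℕ → S → A → ℝ)
    (u : Fin I → ℕ → S → A → ℝ)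
    (c : Fin I → ℝ)
    -- Slater's condition
    (πbar : ℕ → S → A → ℝ) (hπbar : IsPolicy πbar)
    (ξ : Fin I → ℝ) (hξ : ∀ i, 0 < ξ i)
    (hslater : ∀ i, c i + ξ i ≤ Vval H p s₁ (u i) πbar) :
    ∃ (πs : ℕ → S → A → ℝ) (lams : Fin I → ℝ), IsPolicy πs ∧ (∀ i, 0 ≤ lams i) ∧
      -- the primal optimum is attained at `πs`
      (⨅ lam : {l : Fin I → ℝ // ∀ i, 0 ≤ l i},
          ((Lag H p s₁ r u c πs lam.1 : ℝ) : EReal))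
        = (⨆ π : {π : ℕ → S → A → ℝ // IsPolicy π},
            ⨅ lam : {l : Fin I → ℝ // ∀ i, 0 ≤ l i},
              ((Lag H p s₁ r u c π.1 lam.1 : ℝ) : EReal)) ∧
      -- the dual optimum is attained at `lams`
      (⨆ π : {π : ℕ → S → A → ℝ // IsPolicy π},
          ((Lag H p s₁ r u c π.1 lams : ℝ) : EReal))
        = (⨅ lam : {l : Fin I → ℝ // ∀ i, 0 ≤ l i},
            ⨆ π : {π : ℕ → S → A → ℝ // IsPolicy π},
              ((Lag H p s₁ r u c π.1 lam.1 : ℝ) : EReal)) ∧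
      -- strong duality
      (⨆ π : {π : ℕ → S → A → ℝ // IsPolicy π},
          ⨅ lam : {l : Fin I → ℝ // ∀ i, 0 ≤ l i},
            ((Lag H p s₁ r u c π.1 lam.1 : ℝ) : EReal))
        = (⨅ lam : {l : Fin I → ℝ // ∀ i, 0 ≤ l i},
            ⨆ π : {π : ℕ → S → A → ℝ // IsPolicy π},
              ((Lag H p s₁ r u c π.1 lam.1 : ℝ) : EReal)) := by
  have hp₀ : ∀ h s a s', 0 ≤ p h s a s' := fun h s a => (hp h s a).1
  obtain ⟨πs, hπs, hπs_feas, hπs_opt⟩ := CMDP.exists_feasible_policy_forall_Vval_le H p s₁ r u c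
    ⟨πbar, hπbar, fun i => (le_add_of_nonneg_right (hξ i).le).trans (hslater i)⟩
  obtain ⟨lams, hlams, hlams_bound⟩ := exists_lagrange_multiplier_of_slater
    (fun π : {π // IsPolicy π} => Vval H p s₁ r π.1) (fun i π => Vval H p s₁ (u i) π.1 - c i)
    (fun π₁ π₂ t ht => ⟨⟨_, CMDP.isPolicy_mixPolicy hp₀ π₁.2 π₂.2 ht⟩,
      CMDP.Vval_mixPolicy hp₀ π₁.2 π₂.2 ht H r,
      fun i => by rw [CMDP.Vval_mixPolicy hp₀ π₁.2 π₂.2 ht]; ring⟩)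
    ⟨⟨πbar, hπbar⟩, fun i => by linarith [hslater i, hξ i]⟩ (x₀ := ⟨πs, hπs⟩)
    (fun π hπ => hπs_opt π.1 π.2 fun i => sub_nonneg.1 (hπ i))
  have hsaddle : IsSaddlePointOn {l : Fin I → ℝ | ∀ i, 0 ≤ l i} {π | IsPolicy π}
      (fun lam π => ((Lag H p s₁ r u c π lam : ℝ) : EReal)) lams πs :=
    fun lam hlam π hπ =>
      EReal.coe_le_coe ((hlams_bound ⟨π, hπ⟩).trans (CMDP.Vval_le_Lag hπs_feas hlam))
  exact ⟨πs, lams, hπs, hlams, hsaddle.iSup_iInf_subtype_eq_iInf_iSup hlams hπs⟩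

/-- Strong duality for finite-horizon CMDPs, Lemma C.1.
Under Slater's condition,
`max_π inf_{λ ≥ 0} L(π,λ) = min_{λ ≥ 0} max_π L(π,λ)`, and both the primal optimum
(over policies) and the dual optimum (over multipliers) are attained.  The inner
infima/suprema are taken in the extended reals. -/
theorem cmdp_strong_duality
    {S A : Type*} [Fintype S] [Fintype A] [Nonempty S] [Nonempty A]
    {I : ℕ} (H : ℕ) (p : ℕ → S → A → S → ℝ) (hp : IsKernel p) (s₁ : S)
    (r : ℕ → S → A → ℝ) (hr : ∀ h s a, r h s a ∈ Set.Icc (0 : ℝ) 1)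
    (u : Fin I → ℕ → S → A → ℝ) (hu : ∀ i h s a, u i h s a ∈ Set.Icc (0 : ℝ) 1)
    (c : Fin I → ℝ) (hc : ∀ i, c i ∈ Set.Icc (0 : ℝ) (H : ℝ))
    -- Slater's condition
    (πbar : ℕ → S → A → ℝ) (hπbar : IsPolicy πbar)
    (ξ : Fin I → ℝ) (hξ : ∀ i, 0 < ξ i)
    (hslater : ∀ i, c i + ξ i ≤ Vval H p s₁ (u i) πbar) :
    ∃ (πs : ℕ → S → A → ℝ) (lams : Fin I → ℝ), IsPolicy πs ∧ (∀ i, 0 ≤ lams i) ∧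
      -- the primal optimum is attained at `πs`
      (⨅ lam : {l : Fin I → ℝ // ∀ i, 0 ≤ l i},
          ((Lag H p s₁ r u c πs lam.1 : ℝ) : EReal))
        = (⨆ π : {π : ℕ → S → A → ℝ // IsPolicy π},
            ⨅ lam : {l : Fin I → ℝ // ∀ i, 0 ≤ l i},
              ((Lag H p s₁ r u c π.1 lam.1 : ℝ) : EReal)) ∧
      -- the dual optimum is attained at `lams`
      (⨆ π : {π : ℕ → S → A → ℝ // IsPolicy π},
          ((Lag H p s₁ r u c π.1 lams : ℝ) : EReal))
        = (⨅ lam : {l : Fin I → ℝ // ∀ i, 0 ≤ l i},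
            ⨆ π : {π : ℕ → S → A → ℝ // IsPolicy π},
              ((Lag H p s₁ r u c π.1 lam.1 : ℝ) : EReal)) ∧
      -- strong duality
      (⨆ π : {π : ℕ → S → A → ℝ // IsPolicy π},
          ⨅ lam : {l : Fin I → ℝ // ∀ i, 0 ≤ l i},
            ((Lag H p s₁ r u c π.1 lam.1 : ℝ) : EReal))
        = (⨅ lam : {l : Fin I → ℝ // ∀ i, 0 ≤ l i},
            ⨆ π : {π : ℕ → S → A → ℝ // IsPolicy π},
              ((Lag H p s₁ r u c π.1 lam.1 : ℝ) : EReal)) :=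
  cmdp_strong_duality_general H p hp s₁ r u c πbar hπbar ξ hξ hslater

end
end

section
/- Regularized value function bounds (Lemma G.5): let λ ∈ Λ = [0,λ̄]^I, τ > 0, and let π be a policy with π_h(a|s) > 0 for all h,s,a; set ψ_h(s,a) := −log π_h(a|s). Then: (1) for all h,s,a, 0 ≤ Q^π_{r + λᵀu + τψ, h}(s,a) ≤ −τ log π_h(a|s) + H(1 + Iλ̄ + τ log A); (2) if additionally η > 0 with ητ ≤ 1/4, then for all h,s, ∑_a π_h(a|s)·exp(η Q^π_{r + λᵀu + τψ, h}(s,a))·(Q^π_{r + λᵀu + τψ, h}(s,a))² ≤ √A·exp(ηH(1 + λ̄I + τ log A))·(2H²(1 + Iλ̄ + τ log A)² + 128 τ²/e²); (3) with g_{i,h}(s,a) := u_{i,h}(s,a) − c_i/H, the vector (V^π_{g_1},…,V^π_{g_I}) + τλ has Euclidean norm at most √I·(H + τλ̄). -/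
/-! With `ψ = -log π ≥ 0`, the reward `z = r + λᵀu + τψ` is nonnegative and at most
`1 + Iλ̄ + τψ`. The bonus `ψ` is unbounded, but its `π`-average at every state is at most
`log A` (Jensen for `log`), so backward induction gives `0 ≤ Q ≤ τψ + H(1 + Iλ̄ + τ log A)`.

For the local-norm bound write `π = e^{-L}` and `B = H(1 + Iλ̄ + τ log A)`: each summand is at
most `e^{ηB} √π e^{-(1/2 - ητ)L} (τL + B)²`, and `ητ ≤ 1/4` leaves a factor `e^{-L/4}` with
`L² e^{-L/4} ≤ 64/e²`; finally `∑ √π ≤ √A` by Cauchy–Schwarz.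

The last bound is coordinatewise: `g_i ∈ [-1, 1]`, so `|V_{g_i} + τλ_i| ≤ H + τλ̄`. -/

open Finset

noncomputable section

/-- Entropy `𝓗(π) = −E_π[∑_{h=1}^H log π_h(a_h|s_h)]`, expressed as the value of the
reward function `(h,s,a) ↦ −log π_h(a|s)`. -/
def entropy {S A : Type*} [Fintype S] [Fintype A] (H : ℕ) (p : ℕ → S → A → S → ℝ)
    (s₁ : S) (π : ℕ → S → A → ℝ) : ℝ :=
  Vval H p s₁ (fun h s a => - Real.log (π h s a)) π

/-- The regularized Lagrangian `L_τ(π,λ) = L(π,λ) + τ(𝓗(π) + ½‖λ‖²)`. -/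
def Lreg {S A : Type*} [Fintype S] [Fintype A] {I : ℕ} (H : ℕ) (p : ℕ → S → A → S → ℝ)
    (s₁ : S) (r : ℕ → S → A → ℝ) (u : Fin I → ℕ → S → A → ℝ) (c : Fin I → ℝ)
    (τ : ℝ) (π : ℕ → S → A → ℝ) (lam : Fin I → ℝ) : ℝ :=
  Lag H p s₁ r u c π lam + τ * (entropy H p s₁ π + (1 / 2) * ∑ i, lam i ^ 2)

/-- `P_π[s_h = s]` (0-indexed step `h`). -/
def stateDist {S A : Type*} [Fintype S] [Fintype A] [DecidableEq S]
    (p : ℕ → S → A → S → ℝ) (s₁ : S) (π : ℕ → S → A → ℝ) : ℕ → S → ℝ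
  | 0 => fun s => if s = s₁ then 1 else 0
  | h + 1 => fun s' => ∑ s, ∑ a, stateDist p s₁ π h s * π h s a * p h s a s'

/-- Kullback-Leibler divergence between two distributions on a finite set. -/
def klDiv {A : Type*} [Fintype A] (q q' : A → ℝ) : ℝ :=
  ∑ a, q a * Real.log (q a / q' a)

/-- The potential `Φ` measuring the distance of `(π,λ)` to `(π*_τ, λ*_τ)`:
`Φ = ∑_{h,s} P_{π*_τ}[s_h = s]·KL(π*_{τ,h}(·|s), π_h(·|s)) + ½‖λ*_τ − λ‖²`. -/
def Pot {S A : Type*} [Fintype S] [Fintype A] [DecidableEq S] {I : ℕ} (H : ℕ)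
    (p : ℕ → S → A → S → ℝ) (s₁ : S) (πτ : ℕ → S → A → ℝ) (lamτ : Fin I → ℝ)
    (π : ℕ → S → A → ℝ) (lam : Fin I → ℝ) : ℝ :=
  (∑ h ∈ Finset.range H, ∑ s, stateDist p s₁ πτ h s * klDiv (πτ h s) (π h s))
    + (1 / 2) * ∑ i, (lamτ i - lam i) ^ 2

/-- The regularized primal-dual scheme: `pdIter … k = (π_{k+1}, λ_{k+1})` (so
`pdIter … 0` is the uniform policy together with the zero multiplier, and the dual
update is the Euclidean projection onto the box `Λ = [0, λ̄]^I`). -/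
def pdIter {S A : Type*} [Fintype S] [Fintype A] {I : ℕ} (H : ℕ)
    (p : ℕ → S → A → S → ℝ) (s₁ : S) (r : ℕ → S → A → ℝ) (u : Fin I → ℕ → S → A → ℝ)
    (c : Fin I → ℝ) (η τ lamBar : ℝ) : ℕ → (ℕ → S → A → ℝ) × (Fin I → ℝ)
  | 0 => (fun _ _ _ => (Fintype.card A : ℝ)⁻¹, fun _ => 0)
  | k + 1 =>
      let π := (pdIter H p s₁ r u c η τ lamBar k).1
      let lam := (pdIter H p s₁ r u c η τ lamBar k).2
      let z : ℕ → S → A → ℝ := fun h s a =>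
        r h s a + (∑ i, lam i * u i h s a) + τ * (- Real.log (π h s a))
      (fun h s a =>
          π h s a * Real.exp (η * Qval H p z π h s a) /
            ∑ a', π h s a' * Real.exp (η * Qval H p z π h s a'),
        fun i => max 0 (min lamBar
          ((1 - η * τ) * lam i - η * (Vval H p s₁ (u i) π - c i))))

section

open Real

variable {α : Type*} [Fintype α] {w f : α → ℝ} {B : ℝ}

lemma sum_mul_le_of_le (hw : ∀ a, 0 ≤ w a) (hw1 : ∑ a, w a = 1) (hf : ∀ a, f a ≤ B) :
    ∑ a, w a * f a ≤ B :=
  calc ∑ a, w a * f a ≤ ∑ a, w a * B := by gcongr with a; exacts [hw a, hf a]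
    _ = B := by rw [← Finset.sum_mul, hw1, one_mul]

lemma le_sum_mul_of_le (hw : ∀ a, 0 ≤ w a) (hw1 : ∑ a, w a = 1) (hf : ∀ a, B ≤ f a) :
    B ≤ ∑ a, w a * f a :=
  calc B = ∑ a, w a * B := by rw [← Finset.sum_mul, hw1, one_mul]
    _ ≤ ∑ a, w a * f a := by gcongr with a; exacts [hw a, hf a]

lemma le_one_of_sum_eq_one (hw : ∀ a, 0 ≤ w a) (hw1 : ∑ a, w a = 1) (a : α) : w a ≤ 1 :=
  hw1 ▸ Finset.single_le_sum (fun a _ => hw a) (Finset.mem_univ a)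

lemma sum_mul_neg_log_le_log_card (hw : ∀ a, 0 < w a) (hw1 : ∑ a, w a = 1) :
    ∑ a, w a * -log (w a) ≤ log (Fintype.card α) := by
  have jensen := strictConcaveOn_log_Ioi.concaveOn.le_map_sum (t := Finset.univ) (w := w)
    (p := fun a => (w a)⁻¹) (fun a _ => (hw a).le) hw1 (fun a _ => inv_pos.2 (hw a))
  simpa only [smul_eq_mul, log_inv, mul_inv_cancel₀ (hw _).ne', Finset.sum_const,
    Finset.card_univ, nsmul_eq_mul, mul_one] using jensen

lemma sum_sqrt_le_sqrt_card (hw : ∀ a, 0 ≤ w a) (hw1 : ∑ a, w a = 1) :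
    ∑ a, √(w a) ≤ √(Fintype.card α) := by
  simpa [hw1] using Real.sum_sqrt_mul_sqrt_le Finset.univ hw fun _ => zero_le_one

lemma sqrt_sum_sq_le_sqrt_card_mul {M : ℝ} (hM : 0 ≤ M) (hf : ∀ a, |f a| ≤ M) :
    √(∑ a, f a ^ 2) ≤ √(Fintype.card α) * M := by
  rw [← sqrt_sq hM, ← sqrt_mul (Nat.cast_nonneg _)]
  gcongr
  calc ∑ a, f a ^ 2 ≤ ∑ _a : α, M ^ 2 :=
        Finset.sum_le_sum fun a _ => sq_le_sq' (abs_le.1 (hf a)).1 (abs_le.1 (hf a)).2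
    _ = _ := by simp

lemma sq_mul_exp_neg_mul_le {c x : ℝ} (hc : 0 < c) (hx : 0 ≤ x) :
    x ^ 2 * exp (-(c * x)) ≤ (2 / (c * exp 1)) ^ 2 := by
  have half : x * exp (-(c * x / 2)) ≤ 2 / (c * exp 1) :=
    calc x * exp (-(c * x / 2)) = 2 / c * (c * x / 2 * exp (-(c * x / 2))) := by
          field_simp
      _ ≤ 2 / c * exp (-1) := by gcongr; exact mul_exp_neg_le_exp_neg_one _
      _ = 2 / (c * exp 1) := by rw [exp_neg]; field_simp
  calc x ^ 2 * exp (-(c * x)) = (x * exp (-(c * x / 2))) ^ 2 := by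
        rw [mul_pow, ← exp_nat_mul]; push_cast; ring_nf
    _ ≤ _ := by gcongr

lemma mul_exp_mul_sq_le_of_le_neg_log {q Q η τ B : ℝ} (hq0 : 0 < q) (hq1 : q ≤ 1) (hη : 0 ≤ η)
    (hητ : η * τ ≤ 1 / 4) (hQ0 : 0 ≤ Q) (hQ : Q ≤ τ * -log q + B) :
    q * exp (η * Q) * Q ^ 2 ≤ exp (η * B) * (2 * B ^ 2 + 128 * τ ^ 2 / exp 1 ^ 2) * √q := by
  set L := -log q with hL_def
  have hL : 0 ≤ L := neg_nonneg.2 (log_nonpos hq0.le hq1)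
  have hq : q = exp (-L) := by rw [hL_def, neg_neg, exp_log hq0]
  have hweight : q * exp (η * Q) ≤ exp (η * B) * √q * exp (-(1 / 4 * L)) := by
    rw [hq, ← exp_half]
    calc exp (-L) * exp (η * Q) = exp (-L + η * Q) := (exp_add _ _).symm
      _ ≤ exp (η * B + -L / 2 + -(1 / 4 * L)) := exp_le_exp.2 <| by
          nlinarith [mul_le_mul_of_nonneg_left hQ hη, mul_le_mul_of_nonneg_right hητ hL]
      _ = _ := by rw [exp_add, exp_add]
  have hdecay : L ^ 2 * exp (-(1 / 4 * L)) ≤ 64 / exp 1 ^ 2 := by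
    convert sq_mul_exp_neg_mul_le (c := 1 / 4) (by norm_num) hL using 1
    field_simp
    norm_num
  have hQsq : Q ^ 2 ≤ 2 * τ ^ 2 * L ^ 2 + 2 * B ^ 2 := by
    nlinarith [sq_nonneg (τ * L - B)]
  have hE : exp (-(1 / 4 * L)) ≤ 1 := exp_le_one_iff.2 (by linarith)
  calc q * exp (η * Q) * Q ^ 2
      ≤ exp (η * B) * √q * exp (-(1 / 4 * L)) * (2 * τ ^ 2 * L ^ 2 + 2 * B ^ 2) :=
        mul_le_mul hweight hQsq (sq_nonneg Q) (by positivity)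
    _ = exp (η * B) * √q
          * (2 * τ ^ 2 * (L ^ 2 * exp (-(1 / 4 * L))) + 2 * B ^ 2 * exp (-(1 / 4 * L))) := by
        ring
    _ ≤ exp (η * B) * √q * (2 * τ ^ 2 * (64 / exp 1 ^ 2) + 2 * B ^ 2 * 1) := by gcongr
    _ = _ := by ring

lemma sum_mul_exp_mul_sq_le {q Q : α → ℝ} {η τ B : ℝ} (hq : ∀ a, 0 < q a) (hq1 : ∑ a, q a = 1)
    (hη : 0 ≤ η) (hητ : η * τ ≤ 1 / 4) (hQ0 : ∀ a, 0 ≤ Q a)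
    (hQ : ∀ a, Q a ≤ τ * -log (q a) + B) :
    ∑ a, q a * exp (η * Q a) * Q a ^ 2
      ≤ √(Fintype.card α) * exp (η * B) * (2 * B ^ 2 + 128 * τ ^ 2 / exp 1 ^ 2) := by
  have hq1' := le_one_of_sum_eq_one (fun a => (hq a).le) hq1
  calc ∑ a, q a * exp (η * Q a) * Q a ^ 2
      ≤ ∑ a, exp (η * B) * (2 * B ^ 2 + 128 * τ ^ 2 / exp 1 ^ 2) * √(q a) :=
        Finset.sum_le_sum fun a _ => mul_exp_mul_sq_le_of_le_neg_log (hq a) (hq1' a) hη hητ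
          (hQ0 a) (hQ a)
    _ ≤ exp (η * B) * (2 * B ^ 2 + 128 * τ ^ 2 / exp 1 ^ 2) * √(Fintype.card α) := by
        rw [← Finset.mul_sum]
        gcongr
        exact sum_sqrt_le_sqrt_card (fun a => (hq a).le) hq1
    _ = _ := by ring

end

section ValueBounds

variable {S A : Type*} [Fintype S] [Fintype A] {p : ℕ → S → A → S → ℝ} {π : ℕ → S → A → ℝ}
  {z w : ℕ → S → A → ℝ}

lemma Qaux_mono (hp : IsKernel p) (hπ : IsPolicy π) (hzw : ∀ h s a, z h s a ≤ w h s a) :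
    ∀ n h s a, Qaux p z π n h s a ≤ Qaux p w π n h s a := by
  intro n
  induction n with
  | zero => simp [Qaux]
  | succ n ih =>
    intro h s a
    simp only [Qaux]
    gcongr with s' _ a' _
    exacts [hzw h s a, (hp h s a).1 s', (hπ (h + 1) s').1 a', ih _ _ _]

lemma Qaux_const (hp : IsKernel p) (hπ : IsPolicy π) (c : ℝ) :
    ∀ n h s a, Qaux p (fun _ _ _ => c) π n h s a = n * c := by
  intro n
  induction n with
  | zero => simp [Qaux]
  | succ n ih =>
    intro h s a
    simp only [Qaux, ih, ← Finset.sum_mul, (hπ _ _).2, (hp h s a).2]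
    push_cast
    ring

lemma Qaux_mem_Icc (hp : IsKernel p) (hπ : IsPolicy π) {lo hi : ℝ}
    (hz : ∀ h s a, z h s a ∈ Set.Icc lo hi) (n h : ℕ) (s : S) (a : A) :
    Qaux p z π n h s a ∈ Set.Icc (n * lo) (n * hi) := by
  rw [← Qaux_const hp hπ lo n h s a, ← Qaux_const hp hπ hi n h s a]
  exact ⟨Qaux_mono hp hπ (fun h s a => (hz h s a).1) n h s a,
    Qaux_mono hp hπ (fun h s a => (hz h s a).2) n h s a⟩

lemma Qaux_nonneg (hp : IsKernel p) (hπ : IsPolicy π) (hz : ∀ h s a, 0 ≤ z h s a)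
    (n h : ℕ) (s : S) (a : A) : 0 ≤ Qaux p z π n h s a := by
  simpa [Qaux_const hp hπ] using Qaux_mono hp hπ hz n h s a

lemma Vval_mem_Icc (H : ℕ) (hp : IsKernel p) (hπ : IsPolicy π) (s₁ : S) {lo hi : ℝ}
    (hz : ∀ h s a, z h s a ∈ Set.Icc lo hi) : Vval H p s₁ z π ∈ Set.Icc (H * lo) (H * hi) :=
  ⟨le_sum_mul_of_le (hπ 0 s₁).1 (hπ 0 s₁).2 fun a => (Qaux_mem_Icc hp hπ hz H 0 s₁ a).1,
    sum_mul_le_of_le (hπ 0 s₁).1 (hπ 0 s₁).2 fun a => (Qaux_mem_Icc hp hπ hz H 0 s₁ a).2⟩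

lemma Qaux_le_add_mul (hp : IsKernel p) (hπ : IsPolicy π) {f : ℕ → S → A → ℝ} {K F : ℝ}
    (hf : ∀ h s a, 0 ≤ f h s a) (hz : ∀ h s a, z h s a ≤ K + f h s a)
    (hF : ∀ h s, ∑ a, π h s a * f h s a ≤ F) :
    ∀ n h s a, Qaux p z π n h s a ≤ f h s a + n * (K + F) := by
  intro n
  induction n with
  | zero => simpa [Qaux] using hf
  | succ n ih =>
    intro h s a
    have next : ∀ s', ∑ a', π (h + 1) s' a' * Qaux p z π n (h + 1) s' a' ≤ F + n * (K + F) :=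
      fun s' => calc
        _ ≤ ∑ a', π (h + 1) s' a' * (f (h + 1) s' a' + n * (K + F)) := by
            gcongr with a' _
            exacts [(hπ _ _).1 a', ih _ _ _]
        _ = ∑ a', π (h + 1) s' a' * f (h + 1) s' a' + n * (K + F) := by
            simp only [mul_add, Finset.sum_add_distrib, ← Finset.sum_mul, (hπ _ _).2, one_mul]
        _ ≤ F + n * (K + F) := by linarith [hF (h + 1) s']
    have hnext := sum_mul_le_of_le (hp h s a).1 (hp h s a).2 next
    simp only [Qaux]
    push_cast
    linarith [hz h s a]

end ValueBounds

section Regularized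

variable {S A : Type*} {I : ℕ}

def regReward (r : ℕ → S → A → ℝ) (u : Fin I → ℕ → S → A → ℝ) (lam : Fin I → ℝ) (τ : ℝ)
    (π : ℕ → S → A → ℝ) : ℕ → S → A → ℝ :=
  fun h s a => r h s a + (∑ i, lam i * u i h s a) + τ * (- Real.log (π h s a))

variable {p : ℕ → S → A → S → ℝ} {r : ℕ → S → A → ℝ} {u : Fin I → ℕ → S → A → ℝ}
  {lam : Fin I → ℝ} {τ lamBar : ℝ} {π : ℕ → S → A → ℝ}

lemma neg_log_nonneg_of_isPolicy [Fintype A] (hπ : IsPolicy π) (hπpos : ∀ h s a, 0 < π h s a)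
    (h : ℕ) (s : S) (a : A) : 0 ≤ -Real.log (π h s a) :=
  neg_nonneg.2 <| Real.log_nonpos (hπpos h s a).le <|
    le_one_of_sum_eq_one (hπ h s).1 (hπ h s).2 a

lemma regReward_nonneg [Fintype A] (hr : ∀ h s a, r h s a ∈ Set.Icc (0 : ℝ) 1)
    (hu : ∀ i h s a, u i h s a ∈ Set.Icc (0 : ℝ) 1) (hlam : ∀ i, 0 ≤ lam i) (hτ : 0 ≤ τ)
    (hπ : IsPolicy π) (hπpos : ∀ h s a, 0 < π h s a) (h : ℕ) (s : S) (a : A) :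
    0 ≤ regReward r u lam τ π h s a :=
  add_nonneg (add_nonneg (hr h s a).1 <|
      Finset.sum_nonneg fun i _ => mul_nonneg (hlam i) (hu i h s a).1)
    (mul_nonneg hτ (neg_log_nonneg_of_isPolicy hπ hπpos h s a))

lemma regReward_le (hr : ∀ h s a, r h s a ∈ Set.Icc (0 : ℝ) 1)
    (hu : ∀ i h s a, u i h s a ∈ Set.Icc (0 : ℝ) 1) (hlam : ∀ i, lam i ∈ Set.Icc 0 lamBar)
    (h : ℕ) (s : S) (a : A) :
    regReward r u lam τ π h s a ≤ (1 + I * lamBar) + τ * -Real.log (π h s a) := by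
  have hsum : ∑ i, lam i * u i h s a ≤ I * lamBar :=
    calc ∑ i, lam i * u i h s a ≤ ∑ _i : Fin I, lamBar := Finset.sum_le_sum fun i _ =>
          (mul_le_of_le_one_right (hlam i).1 (hu i h s a).2).trans (hlam i).2
      _ = I * lamBar := by simp
  simp only [regReward]
  linarith [(hr h s a).2]

lemma Qval_regReward_bounds [Fintype S] [Fintype A] [Nonempty A] (H : ℕ) (hp : IsKernel p)
    (hπ : IsPolicy π) (hπpos : ∀ h s a, 0 < π h s a) (hr : ∀ h s a, r h s a ∈ Set.Icc (0 : ℝ) 1)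
    (hu : ∀ i h s a, u i h s a ∈ Set.Icc (0 : ℝ) 1) (hτ : 0 ≤ τ) (hlamBar : 0 ≤ lamBar)
    (hlam : ∀ i, lam i ∈ Set.Icc 0 lamBar) (h : ℕ) (s : S) (a : A) :
    0 ≤ Qval H p (regReward r u lam τ π) π h s a ∧
      Qval H p (regReward r u lam τ π) π h s a
        ≤ -τ * Real.log (π h s a) + H * (1 + I * lamBar + τ * Real.log (Fintype.card A)) := by
  refine ⟨Qaux_nonneg hp hπ (regReward_nonneg hr hu (fun i => (hlam i).1) hτ hπ hπpos) _ h s a,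
    ?_⟩
  have hentropy : ∀ h s, ∑ a, π h s a * (τ * -Real.log (π h s a))
      ≤ τ * Real.log (Fintype.card A) := fun h s => by
    simp only [mul_left_comm _ τ, ← Finset.mul_sum]
    exact mul_le_mul_of_nonneg_left (sum_mul_neg_log_le_log_card (hπpos h s) (hπ h s).2) hτ
  have hQ := Qaux_le_add_mul hp hπ
    (fun h s a => mul_nonneg hτ (neg_log_nonneg_of_isPolicy hπ hπpos h s a))
    (regReward_le hr hu hlam) hentropy (H - h) h s a
  have hK : 0 ≤ 1 + I * lamBar + τ * Real.log (Fintype.card A) := by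
    have : 0 ≤ Real.log (Fintype.card A) := Real.log_nonneg (by exact_mod_cast Fintype.card_pos)
    positivity
  have hsteps : ((H - h : ℕ) : ℝ) ≤ H := by exact_mod_cast Nat.sub_le H h
  calc Qval H p (regReward r u lam τ π) π h s a
      ≤ τ * -Real.log (π h s a)
          + (H - h : ℕ) * (1 + I * lamBar + τ * Real.log (Fintype.card A)) := hQ
    _ ≤ _ := by rw [neg_mul, mul_neg]; gcongr

lemma sqrt_sum_sq_Vval_add_le [Fintype S] [Fintype A] (H : ℕ) (hp : IsKernel p)
    (hπ : IsPolicy π) (s₁ : S) (hu : ∀ i h s a, u i h s a ∈ Set.Icc (0 : ℝ) 1) {c : Fin I → ℝ}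
    (hc : ∀ i, c i ∈ Set.Icc (0 : ℝ) H) (hτ : 0 ≤ τ) (hlamBar : 0 ≤ lamBar)
    (hlam : ∀ i, lam i ∈ Set.Icc 0 lamBar) :
    √(∑ i, (Vval H p s₁ (fun h s a => u i h s a - c i / H) π + τ * lam i) ^ 2)
      ≤ √I * (H + τ * lamBar) := by
  have hV : ∀ i, Vval H p s₁ (fun h s a => u i h s a - c i / H) π
      ∈ Set.Icc ((H : ℝ) * -1) (H * 1) :=
    fun i => Vval_mem_Icc H hp hπ s₁ fun h s a => by
      have hc_div_le_one : c i / H ≤ 1 := div_le_one_of_le₀ (hc i).2 H.cast_nonneg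
      have hc_div_nonneg : 0 ≤ c i / H := div_nonneg (hc i).1 H.cast_nonneg
      constructor <;> linarith [(hu i h s a).1, (hu i h s a).2]
  have hterm : ∀ i, |Vval H p s₁ (fun h s a => u i h s a - c i / H) π + τ * lam i|
      ≤ H + τ * lamBar := fun i => by
    have hlam_nonneg : 0 ≤ τ * lam i := mul_nonneg hτ (hlam i).1
    have hlam_le : τ * lam i ≤ τ * lamBar := mul_le_mul_of_nonneg_left (hlam i).2 hτ
    rw [abs_le]
    constructor <;> linarith [(hV i).1, (hV i).2]
  simpa using sqrt_sum_sq_le_sqrt_card_mul (by positivity) hterm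

end Regularized

theorem reg_value_function_bounds_general
    {S A : Type*} [Fintype S] [Fintype A] [Nonempty A]
    {I : ℕ} (H : ℕ)
    (p : ℕ → S → A → S → ℝ) (hp : IsKernel p) (s₁ : S)
    (r : ℕ → S → A → ℝ) (hr : ∀ h s a, r h s a ∈ Set.Icc (0 : ℝ) 1)
    (u : Fin I → ℕ → S → A → ℝ) (hu : ∀ i h s a, u i h s a ∈ Set.Icc (0 : ℝ) 1)
    (c : Fin I → ℝ) (hc : ∀ i, c i ∈ Set.Icc (0 : ℝ) (H : ℝ))
    (τ : ℝ) (hτ : 0 < τ) (lamBar : ℝ) (hlamBar : 0 < lamBar)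
    (lam : Fin I → ℝ) (hlam : ∀ i, lam i ∈ Set.Icc (0 : ℝ) lamBar)
    (π : ℕ → S → A → ℝ) (hπ : IsPolicy π) (hπpos : ∀ h s a, 0 < π h s a) :
    -- (1) pointwise bounds on the regularized Q-values
    (∀ h s a,
      0 ≤ Qval H p
            (fun h' s' a' => r h' s' a' + (∑ i, lam i * u i h' s' a')
              + τ * (- Real.log (π h' s' a'))) π h s a ∧
      Qval H p
          (fun h' s' a' => r h' s' a' + (∑ i, lam i * u i h' s' a')
            + τ * (- Real.log (π h' s' a'))) π h s a
        ≤ - τ * Real.log (π h s a)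
          + (H : ℝ) * (1 + I * lamBar + τ * Real.log (Fintype.card A))) ∧
    -- (2) local-norm bound
    (∀ η : ℝ, 0 < η → η * τ ≤ 1 / 4 → ∀ h s,
      ∑ a, π h s a *
          Real.exp (η * Qval H p
            (fun h' s' a' => r h' s' a' + (∑ i, lam i * u i h' s' a')
              + τ * (- Real.log (π h' s' a'))) π h s a) *
          (Qval H p
            (fun h' s' a' => r h' s' a' + (∑ i, lam i * u i h' s' a')
              + τ * (- Real.log (π h' s' a'))) π h s a) ^ 2
        ≤ Real.sqrt (Fintype.card A) *
            Real.exp (η * H * (1 + lamBar * I + τ * Real.log (Fintype.card A))) *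
            (2 * (H : ℝ) ^ 2 * (1 + I * lamBar + τ * Real.log (Fintype.card A)) ^ 2
              + 128 * τ ^ 2 / Real.exp 1 ^ 2)) ∧
    -- (3) norm bound on the shifted constraint values
    Real.sqrt (∑ i,
        (Vval H p s₁ (fun h s a => u i h s a - c i / (H : ℝ)) π + τ * lam i) ^ 2)
      ≤ Real.sqrt I * ((H : ℝ) + τ * lamBar) := by
  have hQ := Qval_regReward_bounds H hp hπ hπpos hr hu hτ.le hlamBar.le hlam
  refine ⟨hQ, fun η hη hητ h s => ?_,
    sqrt_sum_sq_Vval_add_le H hp hπ s₁ hu hc hτ.le hlamBar.le hlam⟩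
  have hlocal := sum_mul_exp_mul_sq_le (hπpos h s) (hπ h s).2 hη.le hητ
    (fun a => (hQ h s a).1) (B := H * (1 + I * lamBar + τ * Real.log (Fintype.card A)))
    fun a => by linarith [(hQ h s a).2]
  calc _ ≤ _ := hlocal
    _ = _ := by
      rw [show η * (H * (1 + I * lamBar + τ * Real.log (Fintype.card A)))
        = η * H * (1 + lamBar * I + τ * Real.log (Fintype.card A)) by ring]
      ring

/-- Regularized value function bounds, Lemma G.5.
For `λ ∈ [0,λ̄]^I`, `τ > 0`, and a policy `π` with everywhere positive action
probabilities, with `ψ_h(s,a) = −log π_h(a|s)` and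
`z = r + λᵀu + τψ`: (1) `0 ≤ Q^π_{z,h}(s,a) ≤ −τ log π_h(a|s) + H(1 + Iλ̄ + τ log A)`;
(2) if `0 < η` and `ητ ≤ 1/4`, the local-norm bound on the exponentiated `Q`-values
holds; (3) `‖(V^π_{g_1},…,V^π_{g_I}) + τλ‖ ≤ √I (H + τλ̄)` where
`g_{i,h}(s,a) = u_{i,h}(s,a) − c_i/H`. -/
theorem reg_value_function_bounds
    {S A : Type*} [Fintype S] [Fintype A] [Nonempty S] [Nonempty A]
    {I : ℕ} (H : ℕ) (hH : 0 < H)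
    (p : ℕ → S → A → S → ℝ) (hp : IsKernel p) (s₁ : S)
    (r : ℕ → S → A → ℝ) (hr : ∀ h s a, r h s a ∈ Set.Icc (0 : ℝ) 1)
    (u : Fin I → ℕ → S → A → ℝ) (hu : ∀ i h s a, u i h s a ∈ Set.Icc (0 : ℝ) 1)
    (c : Fin I → ℝ) (hc : ∀ i, c i ∈ Set.Icc (0 : ℝ) (H : ℝ))
    (τ : ℝ) (hτ : 0 < τ) (lamBar : ℝ) (hlamBar : 0 < lamBar)
    (lam : Fin I → ℝ) (hlam : ∀ i, lam i ∈ Set.Icc (0 : ℝ) lamBar)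
    (π : ℕ → S → A → ℝ) (hπ : IsPolicy π) (hπpos : ∀ h s a, 0 < π h s a) :
    -- (1) pointwise bounds on the regularized Q-values
    (∀ h s a,
      0 ≤ Qval H p
            (fun h' s' a' => r h' s' a' + (∑ i, lam i * u i h' s' a')
              + τ * (- Real.log (π h' s' a'))) π h s a ∧
      Qval H p
          (fun h' s' a' => r h' s' a' + (∑ i, lam i * u i h' s' a')
            + τ * (- Real.log (π h' s' a'))) π h s a
        ≤ - τ * Real.log (π h s a)
          + (H : ℝ) * (1 + I * lamBar + τ * Real.log (Fintype.card A))) ∧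
    -- (2) local-norm bound
    (∀ η : ℝ, 0 < η → η * τ ≤ 1 / 4 → ∀ h s,
      ∑ a, π h s a *
          Real.exp (η * Qval H p
            (fun h' s' a' => r h' s' a' + (∑ i, lam i * u i h' s' a')
              + τ * (- Real.log (π h' s' a'))) π h s a) *
          (Qval H p
            (fun h' s' a' => r h' s' a' + (∑ i, lam i * u i h' s' a')
              + τ * (- Real.log (π h' s' a'))) π h s a) ^ 2
        ≤ Real.sqrt (Fintype.card A) *
            Real.exp (η * H * (1 + lamBar * I + τ * Real.log (Fintype.card A))) *
            (2 * (H : ℝ) ^ 2 * (1 + I * lamBar + τ * Real.log (Fintype.card A)) ^ 2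
              + 128 * τ ^ 2 / Real.exp 1 ^ 2)) ∧
    -- (3) norm bound on the shifted constraint values
    Real.sqrt (∑ i,
        (Vval H p s₁ (fun h s a => u i h s a - c i / (H : ℝ)) π + τ * lam i) ^ 2)
      ≤ Real.sqrt I * ((H : ℝ) + τ * lamBar) :=
  reg_value_function_bounds_general H p hp s₁ r hr u hu c hc τ hτ lamBar hlamBar lam hlam π hπ hπpos
end
end
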